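/- Let (X, μ) be a measure space with μ a nonnegative measure, let 1 < p < ∞ and let p' be the conjugate exponent of p. If f ∈ L^p(X, μ) and g ∈ L^{p'}(X, μ) are complex-valued functions such that ∫_X f·g dμ = ‖f‖_p · ‖g‖_{p'} ≠ 0, then for μ-almost every x ∈ X one has g(x) = ‖g‖_{p'} · ‖f‖_p^{1−p} · |f(x)|^{p−1} · sgn(conj(f(x))). -/

import Mathlib

/-!
Write `A = ‖f‖_p`, `B = ‖g‖_{p'}`. The chain
`A B = |∫ f g| ≤ ∫ |f g| ≤ A B` (the last step is Hölder) is an equality throughout.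
Equality in the first step forces `f g ≥ 0` a.e., which fixes the phase of `g` as that of
`conj f`. Equality in Hölder means that the integral of the nonnegative Young defect
`(|f|/A)^p/p + (|g|/B)^{p'}/p' - (|f|/A)(|g|/B)` vanishes, so `(|f|/A)^p = (|g|/B)^{p'}` a.e.,
which fixes the modulus `|g| = B A^{1-p} |f|^{p-1}`.
-/

open MeasureTheory Complex

noncomputable def csgn (z : ℂ) : ℂ := if z = 0 then 0 else z / ‖z‖

open scoped ComplexOrder

theorem eq_norm_mul_csgn_conj_of_nonneg_mul {z w : ℂ} (hzw : 0 ≤ z * w) (hz : z ≠ 0) :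
    w = ‖w‖ * csgn (starRingEnd ℂ z) := by
  have hzw' : z * w = ‖z‖ * ‖w‖ := by
    rw [Complex.eq_re_of_ofReal_le hzw, Complex.re_eq_norm.2 hzw, norm_mul, Complex.ofReal_mul]
  have hz' : (‖z‖ : ℂ) ≠ 0 := by exact_mod_cast norm_ne_zero_iff.2 hz
  rw [csgn, if_neg (by simpa using hz), Complex.norm_conj, mul_div_assoc', eq_div_iff hz']
  apply mul_left_cancel₀ hz
  linear_combination (‖z‖ : ℂ) * hzw' - (‖w‖ : ℂ) * Complex.mul_conj' z

namespace Real.HolderConjugate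

variable {p q : ℝ}

theorem eq_rpow_sub_one_of_rpow_eq (hpq : p.HolderConjugate q) {a b : ℝ} (ha : 0 ≤ a)
    (hb : 0 ≤ b) (h : a ^ p = b ^ q) : b = a ^ (p - 1) := by
  rw [← hpq.div_conj_eq_sub_one, div_eq_mul_inv, Real.rpow_mul ha, h,
    Real.rpow_rpow_inv hb hpq.symm.ne_zero]

theorem eq_mul_rpow_of_rpow_div_eq (hpq : p.HolderConjugate q) {a b A B : ℝ} (ha : 0 ≤ a)
    (hb : 0 ≤ b) (hA : 0 < A) (hB : 0 < B) (h : (a / A) ^ p = (b / B) ^ q) :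
    b = B * A ^ (1 - p) * a ^ (p - 1) := by
  have := hpq.eq_rpow_sub_one_of_rpow_eq (by positivity) (by positivity) h
  rw [Real.div_rpow ha hA.le, div_eq_iff hB.ne'] at this
  rw [this, show 1 - p = -(p - 1) by ring, Real.rpow_neg hA.le]
  field_simp

end Real.HolderConjugate

namespace MeasureTheory

variable {X : Type*} [MeasurableSpace X] {μ : Measure X}

theorem ae_nonneg_of_integral_eq_integral_norm {F : X → ℂ} (hF : Integrable F μ)
    (h : ∫ x, F x ∂μ = ((∫ x, ‖F x‖ ∂μ : ℝ) : ℂ)) : ∀ᵐ x ∂μ, 0 ≤ F x := by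
  have hre : ∫ x, (F x).re ∂μ = ∫ x, ‖F x‖ ∂μ :=
    (integral_re hF).trans (by simp [h])
  filter_upwards [(integral_eq_iff_of_ae_le hF.re hF.norm
    (.of_forall fun x ↦ Complex.re_le_norm (F x))).1 hre] with x hx
  exact Complex.re_eq_norm.1 hx

section NormedAddCommGroup

variable {E F : Type*} [NormedAddCommGroup E] [NormedAddCommGroup F] {p q : ℝ}

theorem MemLp.integrable_norm_rpow_ofReal {f : X → E} (hp : 0 < p)
    (hf : MemLp f (ENNReal.ofReal p) μ) : Integrable (fun x ↦ ‖f x‖ ^ p) μ := by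
  simpa [hp.le] using hf.integrable_norm_rpow (by simpa using hp) ENNReal.ofReal_ne_top

theorem MemLp.integral_norm_rpow_eq {f : X → E} (hp : 0 < p)
    (hf : MemLp f (ENNReal.ofReal p) μ) :
    ∫ x, ‖f x‖ ^ p ∂μ = (eLpNorm f (ENNReal.ofReal p) μ).toReal ^ p := by
  rw [toReal_eLpNorm hf.1, lpNorm_eq_integral_norm_rpow_toReal (by simpa using hp) (by simp) hf.1,
    ENNReal.toReal_ofReal hp.le,
    Real.rpow_inv_rpow (integral_nonneg fun x ↦ by positivity) hp.ne']

theorem integral_mul_norm_le_eLpNorm_mul_eLpNorm {f g : X → E}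
    (hpq : p.HolderConjugate q) (hf : MemLp f (ENNReal.ofReal p) μ)
    (hg : MemLp g (ENNReal.ofReal q) μ) :
    ∫ x, ‖f x‖ * ‖g x‖ ∂μ ≤
      (eLpNorm f (ENNReal.ofReal p) μ).toReal * (eLpNorm g (ENNReal.ofReal q) μ).toReal := by
  have := integral_mul_norm_le_Lp_mul_Lq hpq hf hg
  rwa [hf.integral_norm_rpow_eq hpq.pos, hg.integral_norm_rpow_eq hpq.symm.pos,
    one_div, one_div, Real.rpow_rpow_inv ENNReal.toReal_nonneg hpq.ne_zero,
    Real.rpow_rpow_inv ENNReal.toReal_nonneg hpq.symm.ne_zero] at this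

theorem ae_rpow_norm_div_eq_of_integral_mul_norm_eq {f : X → E} {g : X → F}
    (hpq : p.HolderConjugate q) (hf : MemLp f (ENNReal.ofReal p) μ)
    (hg : MemLp g (ENNReal.ofReal q) μ) {A B : ℝ} (hA : ∫ x, ‖f x‖ ^ p ∂μ = A ^ p)
    (hB : ∫ x, ‖g x‖ ^ q ∂μ = B ^ q) (hA0 : 0 < A) (hB0 : 0 < B)
    (h : ∫ x, ‖f x‖ * ‖g x‖ ∂μ = A * B) :
    ∀ᵐ x ∂μ, (‖f x‖ / A) ^ p = (‖g x‖ / B) ^ q := by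
  have := hpq.ennrealOfReal
  have hfA (x : X) : (‖f x‖ / A) ^ p = ‖f x‖ ^ p / A ^ p := Real.div_rpow (norm_nonneg _) hA0.le p
  have hgB (x : X) : (‖g x‖ / B) ^ q = ‖g x‖ ^ q / B ^ q := Real.div_rpow (norm_nonneg _) hB0.le q
  have hfgAB (x : X) : ‖f x‖ / A * (‖g x‖ / B) = ‖f x‖ * ‖g x‖ / (A * B) := div_mul_div_comm ..
  have hfp : Integrable (fun x ↦ (‖f x‖ / A) ^ p / p) μ := by
    simp_rw [hfA]; exact ((hf.integrable_norm_rpow_ofReal hpq.pos).div_const _).div_const _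
  have hgq : Integrable (fun x ↦ (‖g x‖ / B) ^ q / q) μ := by
    simp_rw [hgB]; exact ((hg.integrable_norm_rpow_ofReal hpq.symm.pos).div_const _).div_const _
  have hfg : Integrable (fun x ↦ ‖f x‖ / A * (‖g x‖ / B)) μ := by
    simp_rw [hfgAB]; exact (hf.norm.integrable_mul hg.norm).div_const _
  have hint : ∫ x, ‖f x‖ / A * (‖g x‖ / B) ∂μ =
      ∫ x, (‖f x‖ / A) ^ p / p + (‖g x‖ / B) ^ q / q ∂μ := by
    rw [integral_add hfp hgq]
    simp_rw [hfA, hgB, hfgAB]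
    rw [integral_div, integral_div, integral_div, integral_div, integral_div, h, hA, hB,
      div_self (by positivity), div_self (by positivity), div_self (by positivity),
      hpq.one_div_add_one_div, div_one]
  filter_upwards [(integral_eq_iff_of_ae_le hfg (hfp.add hgq) (.of_forall fun x ↦
    Real.young_inequality_of_nonneg (by positivity) (by positivity) hpq)).1 hint] with x hx
  exact (Real.young_inequality_eq_iff_of_nonneg (by positivity) (by positivity) hpq).1 hx

end NormedAddCommGroup

end MeasureTheory

/-- Equality case in the generalized Hölder inequality, `1 < p < ∞`. -/
theorem equality_in_holder {X : Type*} [MeasurableSpace X] (μ : Measure X)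
    (p q : ℝ) (hpq : p.HolderConjugate q)
    (f g : X → ℂ)
    (hf : MemLp f (ENNReal.ofReal p) μ)
    (hg : MemLp g (ENNReal.ofReal q) μ)
    (heq : ∫ x, f x * g x ∂μ =
      (((eLpNorm f (ENNReal.ofReal p) μ).toReal *
        (eLpNorm g (ENNReal.ofReal q) μ).toReal : ℝ) : ℂ))
    (hne : (eLpNorm f (ENNReal.ofReal p) μ).toReal *
      (eLpNorm g (ENNReal.ofReal q) μ).toReal ≠ 0) :
    ∀ᵐ x ∂μ, g x =
      (((eLpNorm g (ENNReal.ofReal q) μ).toReal : ℝ) : ℂ) *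
      ((((eLpNorm f (ENNReal.ofReal p) μ).toReal ^ (1 - p) : ℝ)) : ℂ) *
      (((‖f x‖ ^ (p - 1) : ℝ)) : ℂ) *
      csgn (starRingEnd ℂ (f x)) := by
  set A := (eLpNorm f (ENNReal.ofReal p) μ).toReal
  set B := (eLpNorm g (ENNReal.ofReal q) μ).toReal
  have hA0 : 0 < A := ENNReal.toReal_nonneg.lt_of_ne' (left_ne_zero_of_mul hne)
  have hB0 : 0 < B := ENNReal.toReal_nonneg.lt_of_ne' (right_ne_zero_of_mul hne)
  have := hpq.ennrealOfReal
  have hnorm : ∫ x, ‖f x * g x‖ ∂μ = A * B := by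
    refine le_antisymm (by simpa only [norm_mul] using
      integral_mul_norm_le_eLpNorm_mul_eLpNorm hpq hf hg) ?_
    calc A * B = ‖∫ x, f x * g x ∂μ‖ := by
          rw [heq, Complex.norm_real, Real.norm_of_nonneg (by positivity)]
      _ ≤ ∫ x, ‖f x * g x‖ ∂μ := norm_integral_le_integral_norm _
  have hphase := ae_nonneg_of_integral_eq_integral_norm (F := fun x ↦ f x * g x)
    (hf.integrable_mul hg) (by rw [heq, hnorm])
  have hmodulus := ae_rpow_norm_div_eq_of_integral_mul_norm_eq hpq hf hg
    (hf.integral_norm_rpow_eq hpq.pos) (hg.integral_norm_rpow_eq hpq.symm.pos) hA0 hB0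
    (by simpa only [norm_mul] using hnorm)
  filter_upwards [hphase, hmodulus] with x hnonneg hyoung
  have hg_norm := hpq.eq_mul_rpow_of_rpow_div_eq (norm_nonneg _) (norm_nonneg _) hA0 hB0 hyoung
  rcases eq_or_ne (f x) 0 with hf0 | hf0
  · simpa [hf0, Real.zero_rpow hpq.sub_one_ne_zero, csgn] using hg_norm
  · rw [eq_norm_mul_csgn_conj_of_nonneg_mul hnonneg hf0, hg_norm]
    push_cast
    ring
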